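/- arXiv:1312.2546 — 2 statements merged into one kernel-verified Lean document; each statement's English description precedes it below -/
import Mathlib

section
/- Suppose a planar graph on V vertices can be split, for any ε > 0, by removing at most 4·√(V/ε) vertices into components each of size at most ε·V. Then for any m ≥ 1, the vertex set can be partitioned into sets V_1, V_2, ... each of size at most C·m such that the total number of removed (separator) vertices is at most C·V/√m, for some absolute constant C. -/
/-!
Apply the separator hypothesis with `ε = m / |V|`: it removes a set `R` of at most `4 |V| / √m`
vertices and leaves components of at most `m` vertices. The components of `G - R`, together with
the singletons `{r}` for `r ∈ R`, partition the vertices into parts of size at most `m`, and an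
edge avoiding `R` stays inside one component.
-/

open Finset

namespace SimpleGraph

variable {α : Type*} [DecidableEq α] (G : SimpleGraph α) (R : Finset α)

def separatorLabel (u : α) : α ⊕ (G.induce {u | u ∉ R}).ConnectedComponent :=
  if hu : u ∈ R then .inl u else .inr ((G.induce {u | u ∉ R}).connectedComponentMk ⟨u, hu⟩)

variable {G R}

theorem separatorLabel_eq_of_adj {u v : α} (huv : G.Adj u v) (hu : u ∉ R) (hv : v ∉ R) :
    G.separatorLabel R u = G.separatorLabel R v := by
  have hadj : (G.induce {u | u ∉ R}).Adj ⟨u, hu⟩ ⟨v, hv⟩ := huv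
  simp only [separatorLabel, hu, hv, dite_false]
  exact congrArg Sum.inr (ConnectedComponent.sound hadj.reachable)

theorem ncard_separatorLabel_fiber_le {k : ℕ} (hk : 1 ≤ k)
    (hcomp : ∀ c : (G.induce {u | u ∉ R}).ConnectedComponent, c.supp.ncard ≤ k) (a : α) :
    {x | G.separatorLabel R a = G.separatorLabel R x}.ncard ≤ k := by
  by_cases ha : a ∈ R
  · have : {x | G.separatorLabel R a = G.separatorLabel R x} = {a} := by
      ext x
      by_cases hx : x ∈ R
      · simp [separatorLabel, ha, hx, eq_comm]
      · simp [separatorLabel, ha, hx, (ne_of_mem_of_not_mem ha hx).symm]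
    simpa [this] using hk
  · set c := (G.induce {u | u ∉ R}).connectedComponentMk ⟨a, ha⟩
    have : {x | G.separatorLabel R a = G.separatorLabel R x} = Subtype.val '' c.supp := by
      ext x
      by_cases hx : x ∈ R <;> simp [separatorLabel, ha, hx, c, reachable_comm]
    rw [this, Set.ncard_image_of_injective _ Subtype.val_injective]
    exact hcomp c

theorem exists_finpartition_of_separator [Fintype α] {k : ℕ} (hk : 1 ≤ k)
    (hcomp : ∀ c : (G.induce {u | u ∉ R}).ConnectedComponent, c.supp.ncard ≤ k) :
    ∃ P : Finpartition (univ : Finset α), (∀ p ∈ P.parts, #p ≤ k) ∧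
      ∀ u v, G.Adj u v → u ∉ R → v ∉ R → ∀ p ∈ P.parts, u ∈ p → v ∈ p := by
  classical
  let P := Finpartition.ofSetoid (Setoid.ker (G.separatorLabel R))
  have mem_part {a b : α} : b ∈ P.part a ↔ G.separatorLabel R a = G.separatorLabel R b :=
    Finpartition.mem_part_ofSetoid_iff_rel
  refine ⟨P, fun p hp ↦ ?_, fun u v huv hu hv p hp hup ↦ ?_⟩
  · obtain ⟨a, ha⟩ := P.nonempty_of_mem_parts hp
    have hpa : (p : Set α) = {x | G.separatorLabel R a = G.separatorLabel R x} := by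
      ext x
      rw [← P.part_eq_of_mem hp ha]
      exact mem_part
    rw [← Set.ncard_coe_finset, hpa]
    exact ncard_separatorLabel_fiber_le hk hcomp a
  · rw [← P.part_eq_of_mem hp hup, mem_part]
    exact separatorLabel_eq_of_adj huv hu hv

end SimpleGraph

theorem exists_separator_ncard_supp_le {α : Type*} [Fintype α] {G : SimpleGraph α} {K : ℝ}
    (hsep : ∀ ε : ℝ, 0 < ε → ∃ R : Finset α, (#R : ℝ) ≤ K * √(Fintype.card α / ε) ∧
      ∀ c : (G.induce {u | u ∉ R}).ConnectedComponent, (c.supp.ncard : ℝ) ≤ ε * Fintype.card α)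
    {m : ℝ} (hm : 0 < m) :
    ∃ R : Finset α, (#R : ℝ) ≤ K * Fintype.card α / √m ∧
      ∀ c : (G.induce {u | u ∉ R}).ConnectedComponent, (c.supp.ncard : ℝ) ≤ m := by
  rcases (Fintype.card α).eq_zero_or_pos with hV | hV
  · obtain ⟨R, hR, hc⟩ := hsep 1 one_pos
    exact ⟨R, by simpa [hV] using hR, fun c ↦ (hc c).trans (by simp [hV, hm.le])⟩
  · have hV' : (0 : ℝ) < Fintype.card α := mod_cast hV
    obtain ⟨R, hR, hc⟩ := hsep (m / Fintype.card α) (by positivity)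
    refine ⟨R, ?_, fun c ↦ (hc c).trans_eq (div_mul_cancel₀ m hV'.ne')⟩
    rwa [div_div_eq_mul_div, Real.sqrt_div (by positivity), Real.sqrt_mul_self hV'.le,
      ← mul_div_assoc] at hR

/-- Assuming the recursive planar separator theorem (for every `ε > 0` one
can remove at most `4√(V/ε)` vertices so that every remaining connected component has at
most `ε·V` vertices) for a bounded-degree graph, for every `m ≥ 1` the vertex set can be
partitioned into parts of size at most `C·m` with a separator set `R` of size at most
`C·V/√m` such that every edge between distinct parts touches `R`. -/
theorem stmt_6 (d : ℕ) :
    ∃ C : ℝ, 0 < C ∧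
      ∀ (α : Type) [Fintype α] [DecidableEq α] (G : SimpleGraph α)
        [DecidableRel G.Adj],
        (∀ v, G.degree v ≤ d) →
        (∀ ε : ℝ, 0 < ε →
          ∃ R : Finset α, ((R.card : ℝ) ≤ 4 * Real.sqrt ((Fintype.card α : ℝ) / ε)) ∧
            ∀ c : (G.induce {u : α | u ∉ R}).ConnectedComponent,
              (c.supp.ncard : ℝ) ≤ ε * Fintype.card α) →
        ∀ m : ℝ, 1 ≤ m →
          ∃ (P : Finpartition (Finset.univ : Finset α)) (R : Finset α),
            ((R.card : ℝ) ≤ C * (Fintype.card α : ℝ) / Real.sqrt m) ∧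
            (∀ p ∈ P.parts, (p.card : ℝ) ≤ C * m) ∧
            (∀ u v : α, G.Adj u v → u ∉ R → v ∉ R →
              ∀ p ∈ P.parts, u ∈ p → v ∈ p) := by
  refine ⟨4, by norm_num, fun α _ _ G _ _ hsep m hm ↦ ?_⟩
  obtain ⟨R, hR, hcomp⟩ := exists_separator_ncard_supp_le hsep (zero_lt_one.trans_le hm)
  obtain ⟨P, hP, hPR⟩ := SimpleGraph.exists_finpartition_of_separator
    ((Nat.one_le_floor_iff m).2 hm) fun c ↦ Nat.le_floor (hcomp c)
  refine ⟨P, R, hR, fun p hp ↦ ?_, hPR⟩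
  calc (#p : ℝ) ≤ ⌊m⌋₊ := mod_cast hP p hp
    _ ≤ m := Nat.floor_le (zero_le_one.trans hm)
    _ ≤ 4 * m := by linarith
end

section
/- Deterministic subround scheme: partition a collection of local correction operations into k = O(1) color classes such that operations of the same color do not interact, and each operation interacts with at most D operations of other colors. Let W_a ≥ 0 be the weight reduction that color class a would achieve if run first, and suppose the actual reduction W'_a of class a satisfies W'_a ≥ W_a − D·Σ_{b<a} W'_b. Then Σ_a W'_a ≥ (1/(1+D)^{k}) · max_a W_a; in particular Σ_a W'_a ≥ c(k,D) · Σ_a W_a for c(k,D) = 1/(k(1+D)^k). -/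
/-! Already the bound `W a ≤ (1 + D) · Σ W'` holds for every class `a`: the inequality for `a`
gives `W a ≤ W' a + D · Σ_{b<a} W' b`, and both terms are at most the total (times `1` and `D`).
Dividing by `(1 + D)^k ≥ 1 + D` gives the first claim, and averaging it over the `k` classes
gives the second. -/

open Finset

theorem le_one_add_mul_sum_of_sub_mul_sum_le {ι : Type*} [Fintype ι] {D w : ℝ} (hD : 0 ≤ D)
    {W' : ι → ℝ} (hW' : ∀ i, 0 ≤ W' i) (s : Finset ι) (i : ι)
    (h : w - D * ∑ b ∈ s, W' b ≤ W' i) :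
    w ≤ (1 + D) * ∑ b, W' b := by
  have h_single : W' i ≤ ∑ b, W' b := single_le_sum (fun b _ => hW' b) (mem_univ i)
  have h_partial : ∑ b ∈ s, W' b ≤ ∑ b, W' b :=
    sum_le_sum_of_subset_of_nonneg (subset_univ s) fun b _ _ => hW' b
  nlinarith [mul_le_mul_of_nonneg_left h_partial hD]

theorem one_div_card_mul_sum_le {ι : Type*} [Fintype ι] {x : ι → ℝ} {S : ℝ} (hS : 0 ≤ S)
    (hx : ∀ i, x i ≤ S) :
    1 / Fintype.card ι * ∑ i, x i ≤ S := by
  rcases (Fintype.card ι).eq_zero_or_pos with hcard | hcard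
  · simpa [hcard] using hS
  have hsum : ∑ i, x i ≤ Fintype.card ι * S := by
    simpa using sum_le_sum fun i (_ : i ∈ univ) => hx i
  rw [one_div, inv_mul_le_iff₀ (by exact_mod_cast hcard)]
  exact hsum

theorem stmt_9_general (k : ℕ) (D : ℝ) (hD : 0 ≤ D) (W W' : Fin k → ℝ)
    (hW' : ∀ a, 0 ≤ W' a)
    (hrec : ∀ a, W a - D * ∑ b ∈ Finset.univ.filter (· < a), W' b ≤ W' a) :
    (∀ a, (1 / (1 + D) ^ k) * W a ≤ ∑ a, W' a) ∧
      (1 / (k * (1 + D) ^ k)) * ∑ a, W a ≤ ∑ a, W' a := by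
  have hS : 0 ≤ ∑ a, W' a := sum_nonneg fun a _ => hW' a
  have h_each : ∀ a, (1 / (1 + D) ^ k) * W a ≤ ∑ a, W' a := by
    intro a
    rw [one_div, inv_mul_le_iff₀ (by positivity)]
    calc W a ≤ (1 + D) * ∑ b, W' b := le_one_add_mul_sum_of_sub_mul_sum_le hD hW' _ a (hrec a)
      _ ≤ (1 + D) ^ k * ∑ b, W' b := by
        gcongr
        exact le_self_pow₀ (by linarith) a.pos.ne'
  refine ⟨h_each, ?_⟩
  calc 1 / (k * (1 + D) ^ k) * ∑ a, W a
      = 1 / Fintype.card (Fin k) * ∑ a, (1 / (1 + D) ^ k) * W a := by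
        rw [← mul_sum, Fintype.card_fin]; ring
    _ ≤ ∑ a, W' a := one_div_card_mul_sum_le hS h_each

/-- Deterministic subround scheme. With `k` color classes, if the actual
weight reduction satisfies `W'_a ≥ W_a − D·Σ_{b<a} W'_b`, then
`Σ_a W'_a ≥ (1/(1+D)^k)·W_a` for every `a`, and
`Σ_a W'_a ≥ (1/(k(1+D)^k))·Σ_a W_a`. -/
theorem stmt_9 (k : ℕ) (hk : 0 < k) (D : ℝ) (hD : 0 ≤ D) (W W' : Fin k → ℝ)
    (hW : ∀ a, 0 ≤ W a) (hW' : ∀ a, 0 ≤ W' a)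
    (hrec : ∀ a, W a - D * ∑ b ∈ Finset.univ.filter (· < a), W' b ≤ W' a) :
    (∀ a, (1 / (1 + D) ^ k) * W a ≤ ∑ a, W' a) ∧
      (1 / (k * (1 + D) ^ k)) * ∑ a, W a ≤ ∑ a, W' a :=
  stmt_9_general k D hD W W' hW' hrec
end
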